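/- arXiv:1511.05368 — 3 statements merged into one kernel-verified Lean document; each statement's English description precedes it below -/
import Mathlib

section
/- Let E₁ and E₂ be directed graphs with free path groupoids G₁ = G(E₁) and G₂ = G(E₂), and let h : Arr(G₁) → Arr(G₂) be a groupoid homomorphism whose restriction to W₁ := W(E₁) is injective. Then: (a) for all α, β ∈ W₁, the pair (α, β) is composable (i.e. r(α) = s(β)) if and only if (h(α), h(β)) is composable; (b) for all α, β ∈ W₁, r(α) = r(β) if and only if r(h(α)) = r(h(β)). -/
open CategoryTheory

universe u v u' v'

/-- The set of arrows of a groupoid. -/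
abbrev Arr (C : Type u) [Groupoid.{v} C] : Type (max u v) := Σ (x y : C), x ⟶ y

/-- Two arrows `g₁ : x ⟶ y` and `g₂ : z ⟶ w` are composable if `y = z`. -/
def Arr.Composable {C : Type u} [Groupoid.{v} C] (g₁ g₂ : Arr C) : Prop := g₁.2.1 = g₂.1

/-- Composition of composable arrows. -/
def Arr.comp {C : Type u} [Groupoid.{v} C] (g₁ g₂ : Arr C) (h : g₁.Composable g₂) : Arr C :=
  ⟨g₁.1, g₂.2.1, g₁.2.2 ≫ eqToHom h ≫ g₂.2.2⟩

/-- The identity arrow at an object. -/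
def idArr {C : Type u} [Groupoid.{v} C] (x : C) : Arr C := ⟨x, x, 𝟙 x⟩

/-- Inverse of an arrow. -/
def Arr.inv {C : Type u} [Groupoid.{v} C] (g : Arr C) : Arr C :=
  ⟨g.2.1, g.1, Groupoid.inv g.2.2⟩

/-- A groupoid homomorphism, as a map on arrows preserving composability and composition. -/
def IsGroupoidHom {C : Type u} {D : Type u'} [Groupoid.{v} C] [Groupoid.{v'} D]
    (h : Arr C → Arr D) : Prop :=
  ∀ g₁ g₂ : Arr C, ∀ hc : g₁.Composable g₂,
    ∃ hc' : (h g₁).Composable (h g₂), h (g₁.comp g₂ hc) = (h g₁).comp (h g₂) hc'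

/-- The arrow of the free groupoid associated to a path in the quiver `V`;
this is the image of `p` under the canonical functor `Paths V ⥤ FreeGroupoid V`
extending the inclusion of `V`. -/
def pathArrow (V : Type u) [Quiver.{v + 1} V] {x y : V} (p : Quiver.Path x y) :
    Arr (Quiver.FreeGroupoid V) :=
  ⟨(Quiver.FreeGroupoid.of V).obj x, (Quiver.FreeGroupoid.of V).obj y,
    composePath ((Quiver.FreeGroupoid.of V).mapPath p)⟩

/-- The set `W(E)` of arrows of `FreeGroupoid V` that are images of finite paths of `V`. -/
def WSet (V : Type u) [Quiver.{v + 1} V] : Set (Arr (Quiver.FreeGroupoid V)) :=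
  {a | ∃ (x y : V) (p : Quiver.Path x y), a = pathArrow V p}

/-! Identities are the only idempotent arrows of a groupoid, so a groupoid homomorphism sends
identities to identities and thereby induces a map on objects, which computes the source and
target of every image arrow. Since `W(E₁)` contains every identity, injectivity on `W(E₁)` makes
this object map injective, and both equivalences reduce to equalities of objects. -/

section

variable {C : Type u} {D : Type u'} [Groupoid.{v} C] [Groupoid.{v'} D]

lemma Arr.comp_idArr_self (x : C) : (idArr x).comp (idArr x) rfl = idArr x := by
  simp [Arr.comp, idArr]

lemma Arr.eq_idArr_of_comp_self {g : Arr C} (hc : g.Composable g) (he : g.comp g hc = g) :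
    g = idArr g.1 := by
  obtain ⟨x, y, f⟩ := g
  cases hc
  have hff : f ≫ f = f := by simpa [Arr.comp] using he
  have hf : f = 𝟙 x := by rw [← cancel_epi f, Category.comp_id, hff]
  rw [hf]
  rfl

def objMap (h : Arr C → Arr D) (x : C) : D := (h (idArr x)).1

namespace IsGroupoidHom

variable {h : Arr C → Arr D}

lemma map_idArr (hh : IsGroupoidHom h) (x : C) : h (idArr x) = idArr (objMap h x) := by
  obtain ⟨hc, he⟩ := hh (idArr x) (idArr x) rfl
  rw [Arr.comp_idArr_self] at he
  exact Arr.eq_idArr_of_comp_self hc he.symm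

lemma map_snd_fst (hh : IsGroupoidHom h) (g : Arr C) : (h g).2.1 = objMap h g.2.1 :=
  (hh g (idArr g.2.1) rfl).1

lemma map_fst (hh : IsGroupoidHom h) (g : Arr C) : (h g).1 = objMap h g.1 := by
  have hc : (h (idArr g.1)).2.1 = (h g).1 := (hh (idArr g.1) g rfl).1
  rw [← hc, hh.map_idArr]
  rfl

lemma objMap_injective (hh : IsGroupoidHom h) {S : Set (Arr C)} (hS : ∀ x, idArr x ∈ S)
    (hinj : S.InjOn h) : Function.Injective (objMap h) := fun x y hxy => by
  have : idArr x = idArr y := hinj (hS x) (hS y) (by rw [hh.map_idArr, hh.map_idArr, hxy])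
  exact congrArg Sigma.fst this

end IsGroupoidHom

end

lemma idArr_mem_WSet (V : Type u) [Quiver.{v + 1} V] (x : Quiver.FreeGroupoid V) :
    idArr x ∈ WSet V :=
  ⟨x.as, x.as, Quiver.Path.nil, rfl⟩

/-- If a groupoid homomorphism between free path groupoids is injective on `W(E₁)`, then for
`α, β ∈ W(E₁)`: (a) `(α, β)` is composable iff `(h(α), h(β))` is composable;
(b) `r(α) = r(β)` iff `r(h(α)) = r(h(β))`. -/
theorem groupoidHom_injOn_composable_iff
    (V₁ : Type u) [Quiver.{v + 1} V₁] (V₂ : Type u') [Quiver.{v' + 1} V₂]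
    (h : Arr (Quiver.FreeGroupoid V₁) → Arr (Quiver.FreeGroupoid V₂)) (hhom : IsGroupoidHom h)
    (hinj : Set.InjOn h (WSet V₁)) :
    ∀ a b : Arr (Quiver.FreeGroupoid V₁), a ∈ WSet V₁ → b ∈ WSet V₁ →
      ((a.Composable b ↔ (h a).Composable (h b)) ∧
       (a.2.1 = b.2.1 ↔ (h a).2.1 = (h b).2.1)) := by
  intro a b _ _
  have hobj := hhom.objMap_injective (idArr_mem_WSet V₁) hinj
  simp only [Arr.Composable, hhom.map_fst, hhom.map_snd_fst, hobj.eq_iff, and_self]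
end

section
/- Let E₁ and E₂ be directed graphs with free path groupoids G₁ = G(E₁) and G₂ = G(E₂), and let h : Arr(G₁) → Arr(G₂) be a groupoid homomorphism whose restriction to W₁ := W(E₁) is injective and which satisfies h(W₁) = W₂ := W(E₂). Then for every α ∈ W₁: α = ⟦e⟧ for some edge e of E₁ (i.e. α is the image of a path of length 1) if and only if h(α) = ⟦f⟧ for some edge f of E₂. -/
/-!
An arrow of `W(E)` is the image of an edge exactly when it is not an identity and every
factorisation of it into two arrows of `W(E)` has an identity factor: the length functor
`G(E) ⥤ ℤ`, sending each edge to `1`, takes nonnegative values on `W(E)` and vanishes there only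
on identities. This characterisation is phrased through composition, identities and `W` alone,
so `h` transports it. Identities are the idempotent arrows, hence preserved by `h`; as `W(E₁)`
contains the identities, injectivity on `W(E₁)` makes `h` reflect identities and composability,
and closure of `W(E₁)` under composition pulls factorisations of `h α` back to `W(E₁)`.
-/

open CategoryTheory

universe u v u' v'

namespace Arr

variable {C : Type u} [Groupoid.{v} C]

def IsIndecomposableIn (S : Set (Arr C)) (a : Arr C) : Prop :=
  a ∉ Set.range idArr ∧ ∀ b ∈ S, ∀ c ∈ S, ∀ hbc : b.Composable c, a = b.comp c hbc →
    b ∈ Set.range idArr ∨ c ∈ Set.range idArr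

lemma eq_idArr_of_comp_self_s3 {a : Arr C} (hc : a.Composable a) (ha : a.comp a hc = a) :
    a = idArr a.1 := by
  obtain ⟨x, y, f⟩ := a
  obtain rfl : y = x := hc
  simp only [comp, eqToHom_refl, Category.id_comp, Sigma.mk.injEq, heq_eq_eq, true_and] at ha
  simpa [idArr] using (cancel_epi f).mp (ha.trans (Category.comp_id f).symm)

lemma idArr_comp_idArr (x : C) : (idArr x).comp (idArr x) rfl = idArr x := by
  simp [idArr, comp]

end Arr

namespace IsGroupoidHom

variable {C : Type u} {D : Type u'} [Groupoid.{v} C] [Groupoid.{v'} D] {h : Arr C → Arr D}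

lemma map_idArr_eq_idArr (hh : IsGroupoidHom h) (x : C) :
    h (idArr x) = idArr (h (idArr x)).1 := by
  obtain ⟨hc, hcomp⟩ := hh (idArr x) (idArr x) rfl
  rw [Arr.idArr_comp_idArr] at hcomp
  exact Arr.eq_idArr_of_comp_self_s3 hc hcomp.symm

lemma map_idArr_fst (hh : IsGroupoidHom h) (a : Arr C) : h (idArr a.1) = idArr (h a).1 := by
  obtain ⟨hc, -⟩ := hh (idArr a.1) a rfl
  rw [hh.map_idArr_eq_idArr] at hc ⊢
  exact congrArg idArr hc

lemma map_idArr_snd (hh : IsGroupoidHom h) (a : Arr C) : h (idArr a.2.1) = idArr (h a).2.1 := by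
  obtain ⟨hc, -⟩ := hh a (idArr a.2.1) rfl
  rw [hh.map_idArr_eq_idArr] at hc ⊢
  exact congrArg idArr hc.symm

variable {S : Set (Arr C)} (hh : IsGroupoidHom h) (hS : Set.range idArr ⊆ S)
  (hinj : Set.InjOn h S)
include hh hS hinj

lemma map_mem_range_idArr_iff {a : Arr C} (ha : a ∈ S) :
    h a ∈ Set.range idArr ↔ a ∈ Set.range idArr := by
  refine ⟨fun ⟨z, hz⟩ => ⟨a.1, hinj (hS ⟨_, rfl⟩) ha ?_⟩, fun ⟨x, hx⟩ => ?_⟩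
  · rw [hh.map_idArr_fst, ← hz]
    rfl
  · subst hx
    exact ⟨_, (hh.map_idArr_eq_idArr x).symm⟩

lemma composable_of_map {b c : Arr C} (hbc : (h b).Composable (h c)) : b.Composable c := by
  have : h (idArr b.2.1) = h (idArr c.1) := by
    rw [hh.map_idArr_snd, hh.map_idArr_fst]
    exact congrArg idArr hbc
  exact congrArg Sigma.fst (hinj (hS ⟨_, rfl⟩) (hS ⟨_, rfl⟩) this)

lemma isIndecomposableIn_map_iff {T : Set (Arr D)}
    (hS_comp : ∀ b ∈ S, ∀ c ∈ S, ∀ hbc : b.Composable c, b.comp c hbc ∈ S)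
    (himg : h '' S = T) {a : Arr C} (ha : a ∈ S) :
    (h a).IsIndecomposableIn T ↔ a.IsIndecomposableIn S := by
  unfold Arr.IsIndecomposableIn
  rw [hh.map_mem_range_idArr_iff hS hinj ha]
  refine and_congr_right fun _ =>
    ⟨fun hdec b hb c hc hbc hab => ?_, fun hdec b' hb' c' hc' hbc' hab => ?_⟩
  · obtain ⟨hbc', hmap⟩ := hh b c hbc
    have hb' : h b ∈ T := himg ▸ Set.mem_image_of_mem h hb
    have hc' : h c ∈ T := himg ▸ Set.mem_image_of_mem h hc
    rw [← hh.map_mem_range_idArr_iff hS hinj hb, ← hh.map_mem_range_idArr_iff hS hinj hc]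
    exact hdec _ hb' _ hc' hbc' (hab ▸ hmap)
  · obtain ⟨b, hb, rfl⟩ := himg ▸ hb'
    obtain ⟨c, hc, rfl⟩ := himg ▸ hc'
    have hbc := hh.composable_of_map hS hinj hbc'
    obtain ⟨_, hmap⟩ := hh b c hbc
    have hab : a = b.comp c hbc := hinj ha (hS_comp b hb c hc hbc) (hab.trans hmap.symm)
    rw [hh.map_mem_range_idArr_iff hS hinj hb, hh.map_mem_range_idArr_iff hS hinj hc]
    exact hdec b hb c hc hbc hab

end IsGroupoidHom

namespace Quiver.FreeGroupoid

variable (V : Type u) [Quiver.{v + 1} V]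

def lengthFunctor : Quiver.FreeGroupoid V ⥤ SingleObj (Multiplicative ℤ) :=
  lift { obj := fun _ => SingleObj.star _, map := fun _ => Multiplicative.ofAdd 1 }

lemma lengthFunctor_map_of {x y : V} (e : x ⟶ y) :
    (lengthFunctor V).map ((Quiver.FreeGroupoid.of V).map e) = Multiplicative.ofAdd 1 :=
  congrArg (fun F : V ⥤q SingleObj (Multiplicative ℤ) => F.map e) (lift_spec _)

lemma of_obj_injective : Function.Injective (Quiver.FreeGroupoid.of V).obj :=
  fun _ _ h => CategoryTheory.Quotient.mk.inj h

end Quiver.FreeGroupoid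

open Quiver.FreeGroupoid

def arrLength {V : Type u} [Quiver.{v + 1} V] (a : Arr (Quiver.FreeGroupoid V)) : ℤ :=
  Multiplicative.toAdd ((lengthFunctor V).map a.2.2)

section pathArrow

variable {V : Type u} [Quiver.{v + 1} V]

lemma arrLength_comp (a b : Arr (Quiver.FreeGroupoid V)) (hab : a.Composable b) :
    arrLength (a.comp b hab) = arrLength a + arrLength b := by
  obtain ⟨x, y, f⟩ := a
  obtain ⟨z, w, g⟩ := b
  obtain rfl : y = z := hab
  simp only [arrLength, Arr.comp, eqToHom_refl, Category.id_comp, Functor.map_comp,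
    SingleObj.comp_as_mul]
  exact add_comm _ _

@[simp]
lemma arrLength_idArr (x : Quiver.FreeGroupoid V) : arrLength (idArr x) = 0 :=
  congrArg Multiplicative.toAdd ((lengthFunctor V).map_id x)

lemma arrLength_pathArrow {x y : V} (p : Quiver.Path x y) :
    arrLength (pathArrow V p) = p.length := by
  induction p with
  | nil => exact arrLength_idArr _
  | cons q e ih =>
    simp only [arrLength, pathArrow, Prefunctor.mapPath_cons, composePath_cons, Functor.map_comp,
      lengthFunctor_map_of, SingleObj.comp_as_mul] at ih ⊢
    rw [toAdd_mul, ih, Quiver.Path.length_cons, toAdd_ofAdd, Nat.cast_succ, add_comm]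

lemma pathArrow_comp {x y z : V} (p : Quiver.Path x y) (q : Quiver.Path y z) :
    (pathArrow V p).comp (pathArrow V q) rfl = pathArrow V (p.comp q) := by
  simp [pathArrow, Arr.comp, composePath_comp]

end pathArrow

section WSet

variable {V : Type u} [Quiver.{v + 1} V]

lemma range_idArr_subset_WSet : Set.range idArr ⊆ WSet V := by
  rintro _ ⟨⟨x⟩, rfl⟩
  exact ⟨x, x, .nil, rfl⟩

lemma comp_mem_WSet :
    ∀ a ∈ WSet V, ∀ b ∈ WSet V, ∀ hab : a.Composable b, a.comp b hab ∈ WSet V := by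
  rintro _ ⟨x, y, p, rfl⟩ _ ⟨y', z, q, rfl⟩ hab
  obtain rfl : y = y' := of_obj_injective V hab
  exact ⟨x, z, p.comp q, pathArrow_comp p q⟩

lemma arrLength_nonneg {a : Arr (Quiver.FreeGroupoid V)} (ha : a ∈ WSet V) :
    0 ≤ arrLength a := by
  obtain ⟨x, y, p, rfl⟩ := ha
  rw [arrLength_pathArrow]
  exact Int.natCast_nonneg _

lemma mem_range_idArr_iff_arrLength_eq_zero {a : Arr (Quiver.FreeGroupoid V)}
    (ha : a ∈ WSet V) :
    a ∈ Set.range idArr ↔ arrLength a = 0 := by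
  obtain ⟨x, y, p, rfl⟩ := ha
  rw [arrLength_pathArrow, Int.natCast_eq_zero]
  refine ⟨fun ⟨z, hz⟩ => ?_, fun hp => ?_⟩
  · simpa [arrLength_pathArrow] using congrArg arrLength hz.symm
  · obtain rfl := Quiver.Path.eq_of_length_zero p hp
    obtain rfl := Quiver.Path.eq_nil_of_length_zero p hp
    exact ⟨_, rfl⟩

lemma exists_edge_iff_arrLength_eq_one {a : Arr (Quiver.FreeGroupoid V)} (ha : a ∈ WSet V) :
    (∃ (x y : V) (e : x ⟶ y), a = pathArrow V e.toPath) ↔ arrLength a = 1 := by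
  refine ⟨fun ⟨x, y, e, he⟩ => by simp [he, arrLength_pathArrow], fun h1 => ?_⟩
  obtain ⟨x, y, p, rfl⟩ := ha
  rw [arrLength_pathArrow, Nat.cast_eq_one] at h1
  cases p with
  | nil => simp at h1
  | cons q e =>
    rw [Quiver.Path.length_cons, Nat.add_eq_right] at h1
    obtain rfl := Quiver.Path.eq_of_length_zero q h1
    obtain rfl := Quiver.Path.eq_nil_of_length_zero q h1
    exact ⟨_, _, e, rfl⟩

lemma isIndecomposableIn_WSet_iff {a : Arr (Quiver.FreeGroupoid V)} (ha : a ∈ WSet V) :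
    a.IsIndecomposableIn (WSet V) ↔ arrLength a = 1 := by
  simp only [Arr.IsIndecomposableIn, mem_range_idArr_iff_arrLength_eq_zero ha]
  refine ⟨fun ⟨hne, hdec⟩ => ?_, fun h1 => ⟨by omega, fun b hb c hc hbc hab => ?_⟩⟩
  · obtain ⟨x, y, p, rfl⟩ := ha
    cases p with
    | nil => exact absurd (arrLength_idArr _) hne
    | cons q e =>
      have hsplit : pathArrow V (q.cons e) = (pathArrow V q).comp (pathArrow V e.toPath) rfl :=
        (pathArrow_comp q e.toPath).symm
      have hq : pathArrow V q ∈ WSet V := ⟨_, _, q, rfl⟩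
      have he : pathArrow V e.toPath ∈ WSet V := ⟨_, _, e.toPath, rfl⟩
      have hfactor := hdec _ hq _ he rfl hsplit
      rw [mem_range_idArr_iff_arrLength_eq_zero hq, mem_range_idArr_iff_arrLength_eq_zero he,
        arrLength_pathArrow, arrLength_pathArrow, Quiver.Path.length_toPath] at hfactor
      rw [arrLength_pathArrow, Quiver.Path.length_cons]
      omega
  · rw [hab, arrLength_comp] at h1
    rw [mem_range_idArr_iff_arrLength_eq_zero hb, mem_range_idArr_iff_arrLength_eq_zero hc]
    have := arrLength_nonneg hb
    have := arrLength_nonneg hc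
    omega

end WSet

/-- If a groupoid homomorphism between free path groupoids is injective on `W(E₁)` and maps
`W(E₁)` onto `W(E₂)`, then `α ∈ W(E₁)` is the image of a single edge iff `h(α)` is. -/
theorem groupoidHom_length_one_iff
    (V₁ : Type u) [Quiver.{v + 1} V₁] (V₂ : Type u') [Quiver.{v' + 1} V₂]
    (h : Arr (Quiver.FreeGroupoid V₁) → Arr (Quiver.FreeGroupoid V₂)) (hhom : IsGroupoidHom h)
    (hinj : Set.InjOn h (WSet V₁)) (himg : h '' WSet V₁ = WSet V₂) :
    ∀ a : Arr (Quiver.FreeGroupoid V₁), a ∈ WSet V₁ →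
      ((∃ (x y : V₁) (e : x ⟶ y), a = pathArrow V₁ e.toPath) ↔
       (∃ (x y : V₂) (f : x ⟶ y), h a = pathArrow V₂ f.toPath)) := by
  intro a ha
  have hha : h a ∈ WSet V₂ := himg ▸ Set.mem_image_of_mem h ha
  rw [exists_edge_iff_arrLength_eq_one ha, exists_edge_iff_arrLength_eq_one hha,
    ← isIndecomposableIn_WSet_iff ha, ← isIndecomposableIn_WSet_iff hha,
    hhom.isIndecomposableIn_map_iff range_idArr_subset_WSet hinj comp_mem_WSet himg ha]
end

section
/- Let E be a directed graph satisfying condition (L), i.e. every closed path in E has an exit. Then for every closed path α in E (a finite path with s(α) = r(α) and length ≥ 1), there exists ξ ∈ X with s(ξ) = s(α) such that α is not an initial subpath of ξ; in particular X_α is a proper subset of X_{s(α)}. -/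
/-- A directed graph `E = (E⁰, E¹, s, r)`. -/
structure DirGraph : Type 1 where
  V : Type
  Edge : Type
  src : Edge → V
  rng : Edge → V

namespace DirGraph

variable {G : DirGraph}

/-- A vertex is a sink if no edge has it as its source. -/
def IsSink (G : DirGraph) (v : G.V) : Prop := ∀ e : G.Edge, G.src e ≠ v

/-- A finite path (of length at least one): a nonempty list of edges such that the range of
each edge is the source of the next. -/
structure FinPath (G : DirGraph) : Type where
  edges : List G.Edge
  ne : edges ≠ []
  chain : edges.Chain' (fun e f => G.rng e = G.src f)

/-- The source vertex of a finite path. -/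
def FinPath.source (p : FinPath G) : G.V := G.src (p.edges.head p.ne)

/-- The range vertex of a finite path. -/
def FinPath.range (p : FinPath G) : G.V := G.rng (p.edges.getLast p.ne)

/-- The length of a finite path. -/
def FinPath.length (p : FinPath G) : ℕ := p.edges.length

/-- Concatenation of finite paths `p` and `q` with `r(p) = s(q)`. -/
def FinPath.concat (p q : FinPath G) (h : p.range = q.source) : FinPath G where
  edges := p.edges ++ q.edges
  ne := fun hc => p.ne (List.append_eq_nil_iff.mp hc).1
  chain := List.isChain_append.mpr
    ⟨p.chain, q.chain, by
      intro x hx y hy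
      rw [List.getLast?_eq_some_getLast p.ne] at hx
      rw [List.head?_eq_head q.ne] at hy
      simp only [Option.mem_def, Option.some.injEq] at hx hy
      rw [← hx, ← hy]
      exact h⟩

theorem FinPath.concat_range (p q : FinPath G) (h : p.range = q.source) :
    (p.concat q h).range = q.range := by
  simp only [FinPath.range, FinPath.concat, List.getLast_append_of_ne_nil _ q.ne]

theorem FinPath.concat_source (p q : FinPath G) (h : p.range = q.source) :
    (p.concat q h).source = p.source := by
  simp only [FinPath.source, FinPath.concat, List.head_append_of_ne_nil p.ne]

/-- An infinite path: a sequence of edges such that the range of each edge is the source of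
the next. -/
structure InfPath (G : DirGraph) : Type where
  edges : ℕ → G.Edge
  chain : ∀ i, G.rng (edges i) = G.src (edges (i + 1))

/-- Prepending a finite path `b` to an infinite path `ξ` with `r(b) = s(ξ)`. -/
def InfPath.prepend (b : FinPath G) (ξ : InfPath G) (h : b.range = G.src (ξ.edges 0)) :
    InfPath G where
  edges := fun i => if hi : i < b.edges.length then b.edges[i]
                    else ξ.edges (i - b.edges.length)
  chain := by
    intro i
    split_ifs with h1 h2 h3
    · exact List.isChain_iff_getElem.mp b.chain i (by omega)
    · have hi : i = b.edges.length - 1 := by omega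
      have h0 : i + 1 - b.edges.length = 0 := by omega
      rw [h0]
      subst hi
      rw [← List.getLast_eq_getElem b.ne]
      exact h
    · omega
    · have : i + 1 - b.edges.length = (i - b.edges.length) + 1 := by omega
      rw [this]
      exact ξ.chain (i - b.edges.length)

/-- The set `X`: finite paths ending in a sink, together with the sinks themselves and the
infinite paths. -/
inductive XElem (G : DirGraph) : Type
  | fin (p : FinPath G) (h : G.IsSink p.range)
  | vertex (v : G.V) (h : G.IsSink v)
  | inf (ξ : InfPath G)

/-- The source of an element of `X`. -/
def XElem.source : XElem G → G.V
  | .fin p _ => p.source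
  | .vertex v _ => v
  | .inf ξ => G.src (ξ.edges 0)

/-- `a` is an initial subpath of `x ∈ X`. -/
def IsInitialSub (a : FinPath G) : XElem G → Prop
  | .fin p _ => a.edges <+: p.edges
  | .vertex _ _ => False
  | .inf ξ => ∀ (i : ℕ) (hi : i < a.edges.length), a.edges[i] = ξ.edges i

/-- The set `X_a = {ξ ∈ X : a is an initial subpath of ξ}` for a finite path `a`. -/
def Xpath (a : FinPath G) : Set (XElem G) := {x | IsInitialSub a x}

/-- The set `X_v = {ξ ∈ X : s(ξ) = v}` for a vertex `v`. -/
def Xvert (v : G.V) : Set (XElem G) := {x | x.source = v}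

/-- The set `X_{a⁻¹} = {ξ ∈ X : s(ξ) = r(a)}` for a finite path `a`. -/
def XpathInv (a : FinPath G) : Set (XElem G) := {x | x.source = a.range}

/-- The map `θ_b : X_{b⁻¹} → X`, `θ_b(ξ) = bξ` (concatenation; `b·r(b) := b` when `r(b)`
is a sink). -/
def theta (b : FinPath G) : (x : XElem G) → x.source = b.range → XElem G
  | .fin p hp, hx => .fin (b.concat p hx.symm) (by have e := FinPath.concat_range b p hx.symm; exact e ▸ hp)
  | .vertex v hv, hx => .fin b (hx ▸ hv)
  | .inf ξ, hx => .inf (ξ.prepend b hx.symm)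

/-- The map `θ_{b⁻¹} : X_b → X`, deleting the initial subpath `b` (with `θ_{b⁻¹}(b) = r(b)`
when `r(b)` is a sink). -/
def delete (b : FinPath G) : (x : XElem G) → IsInitialSub b x → XElem G
  | .fin p hp, _ =>
      if h : p.edges.length ≤ b.edges.length then .vertex p.range hp
      else .fin ⟨p.edges.drop b.edges.length,
                 fun hc => h (List.drop_eq_nil_iff.mp hc),
                 p.chain.drop _⟩
        (by
          have hne : p.edges.drop b.edges.length ≠ [] :=
            fun hc => h (List.drop_eq_nil_iff.mp hc)
          show G.IsSink (G.rng ((p.edges.drop b.edges.length).getLast hne))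
          have : (p.edges.drop b.edges.length).getLast hne = p.edges.getLast p.ne := by
            rw [List.getLast_eq_getElem, List.getLast_eq_getElem, List.getElem_drop]
            congr 1
            simp only [List.length_drop]
            omega
          rw [this]
          exact hp)
  | .vertex _ _, hx => absurd hx id
  | .inf ξ, _ => .inf ⟨fun i => ξ.edges (i + b.edges.length),
      fun i => by
        have h' := ξ.chain (i + b.edges.length)
        show G.rng (ξ.edges (i + b.edges.length)) = G.src (ξ.edges (i + 1 + b.edges.length))
        rwa [show i + 1 + b.edges.length = i + b.edges.length + 1 from by omega]⟩

/-- Deleting an initial subpath `b` of `x ∈ X_b` produces an element of `X_{b⁻¹}`. -/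
theorem source_delete (b : FinPath G) (x : XElem G) (hx : IsInitialSub b x) :
    (delete b x hx).source = b.range := by
  cases x with
  | vertex v hv => exact absurd hx id
  | inf ξ =>
      have hlen : 0 < b.edges.length := List.length_pos_iff.mpr b.ne
      show G.src (ξ.edges (0 + b.edges.length)) = b.range
      have h1 : b.edges.getLast b.ne = ξ.edges (b.edges.length - 1) := by
        rw [List.getLast_eq_getElem]
        exact hx _ (by omega)
      have h2 := ξ.chain (b.edges.length - 1)
      rw [show b.edges.length - 1 + 1 = b.edges.length by omega] at h2
      rw [show (0 : ℕ) + b.edges.length = b.edges.length by omega]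
      show G.src (ξ.edges b.edges.length) = G.rng (b.edges.getLast b.ne)
      rw [h1]
      exact h2.symm
  | fin p hp =>
      by_cases h : p.edges.length ≤ b.edges.length
      · have hle : b.edges.length ≤ p.edges.length := hx.length_le
        have heq : b.edges = p.edges := hx.eq_of_length (by omega)
        show (if h : p.edges.length ≤ b.edges.length then XElem.vertex p.range hp
              else _).source = b.range
        rw [dif_pos h]
        show G.rng (p.edges.getLast p.ne) = G.rng (b.edges.getLast b.ne)
        have hgl : p.edges.getLast p.ne = b.edges.getLast b.ne := by
          apply Option.some_injective
          rw [← List.getLast?_eq_some_getLast p.ne, ← List.getLast?_eq_some_getLast b.ne, heq]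
        rw [hgl]
      · have hlen : 0 < b.edges.length := List.length_pos_iff.mpr b.ne
        show (if h : p.edges.length ≤ b.edges.length then XElem.vertex p.range hp
              else _).source = b.range
        rw [dif_neg h]
        show G.src ((p.edges.drop b.edges.length).head _) = b.range
        have hdlt : b.edges.length < p.edges.length := by omega
        have hhead : (p.edges.drop b.edges.length).head
            (fun hc => h (List.drop_eq_nil_iff.mp hc)) = p.edges[b.edges.length] := by
          rw [List.head_eq_getElem, List.getElem_drop]
          simp
        rw [hhead]
        have h1 : b.edges.getLast b.ne = p.edges[b.edges.length - 1] := by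
          rw [List.getLast_eq_getElem]
          exact hx.getElem (by omega)
        have h2 : G.rng (p.edges[b.edges.length - 1]'(by omega)) =
            G.src (p.edges[b.edges.length]'(by omega)) := by
          have h3 := List.isChain_iff_getElem.mp p.chain (b.edges.length - 1) (by omega)
          convert h3 using 3
          all_goals omega
        show G.src p.edges[b.edges.length] = G.rng (b.edges.getLast b.ne)
        rw [h1]
        exact h2.symm

/-- The map `θ_{ab⁻¹} : X_b → X_a` for finite paths `a, b` with `r(a) = r(b)`: it deletes
the initial subpath `b` and prepends `a`. -/
def thetaRepl (a b : FinPath G) (hr : a.range = b.range) (x : XElem G)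
    (hx : IsInitialSub b x) : XElem G :=
  theta a (delete b x hx) (by rw [source_delete]; exact hr.symm)
/-- A closed path: a finite path whose source and range coincide. -/
def FinPath.IsClosed (p : FinPath G) : Prop := p.source = p.range

/-- An exit for a finite path `α = α₁…αₙ`: an edge `e` with `s(e) = s(αᵢ)` and `e ≠ αᵢ`
for some `i`. -/
def FinPath.HasExit (p : FinPath G) : Prop :=
  ∃ (i : ℕ) (hi : i < p.edges.length) (e : G.Edge),
    G.src e = G.src p.edges[i] ∧ e ≠ p.edges[i]

/-- Condition (L): every closed path has an exit. -/
def ConditionL (G : DirGraph) : Prop :=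
  ∀ p : FinPath G, p.IsClosed → p.HasExit

end DirGraph

open DirGraph

/-!
An exit `e` of `α`, with `s(e) = s(αᵢ)` and `e ≠ αᵢ`, lets a path leave `α`: follow `α₁ … αᵢ₋₁`,
then take `e`, then continue by any element of `X` starting at `r(e)`. Such an element exists at
every vertex: if none started at `w`, then `w` would not be a sink and no element could start at
the range of any edge out of `w` either, so these edges chain into an infinite path from `w`. The
resulting element of `X_{s(α)}` has `i`-th edge `e ≠ αᵢ`, so `α` is not an initial subpath of it.
-/

namespace DirGraph

variable {G : DirGraph}

def FinPath.single (e : G.Edge) : FinPath G :=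
  ⟨[e], List.cons_ne_nil e [], List.isChain_singleton e⟩

theorem theta_source (b : FinPath G) (x : XElem G) (h : x.source = b.range) :
    (theta b x h).source = b.source := by
  cases x with
  | fin p _ => exact b.concat_source p h.symm
  | vertex _ _ => rfl
  | inf ξ =>
    show G.src (if h0 : 0 < b.edges.length then b.edges[0] else _) = G.src (b.edges.head b.ne)
    rw [dif_pos (List.length_pos_iff.mpr b.ne), List.head_eq_getElem]

theorem XElem.exists_source_eq (v : G.V) : ∃ x : XElem G, x.source = v := by
  by_contra hv
  have hleave : ∀ w : G.V, (¬∃ x : XElem G, x.source = w) →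
      ∃ e : G.Edge, G.src e = w ∧ ¬∃ x : XElem G, x.source = G.rng e := by
    intro w hw
    have hsink : ¬G.IsSink w := fun hs => hw ⟨.vertex w hs, rfl⟩
    obtain ⟨e, he⟩ : ∃ e : G.Edge, G.src e = w := by simpa [IsSink] using hsink
    refine ⟨e, he, fun ⟨x, hx⟩ => hw ⟨theta (.single e) x hx, ?_⟩⟩
    exact (theta_source (.single e) x hx).trans he
  choose next hnext_src hnext_bad using hleave
  let advance (w : {w : G.V // ¬∃ x : XElem G, x.source = w}) :
      {w : G.V // ¬∃ x : XElem G, x.source = w} :=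
    ⟨G.rng (next w.1 w.2), hnext_bad w.1 w.2⟩
  let walk (n : ℕ) := advance^[n] ⟨v, hv⟩
  let ξ : InfPath G :=
    ⟨fun n => next (walk n).1 (walk n).2, fun n => by
      rw [hnext_src]
      exact congrArg Subtype.val (Function.iterate_succ_apply' advance n _).symm⟩
  exact hv ⟨.inf ξ, hnext_src v hv⟩

theorem IsInitialSub.source_eq {a : FinPath G} {x : XElem G} (h : IsInitialSub a x) :
    x.source = a.source := by
  have ha : 0 < a.edges.length := List.length_pos_iff.mpr a.ne
  cases x with
  | fin p _ =>
    show G.src (p.edges.head p.ne) = G.src (a.edges.head a.ne)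
    rw [List.head_eq_getElem, List.head_eq_getElem, h.getElem ha]
  | vertex _ _ => exact h.elim
  | inf ξ =>
    show G.src (ξ.edges 0) = G.src (a.edges.head a.ne)
    rw [List.head_eq_getElem, h 0 ha]

theorem IsInitialSub.getElem_eq_getElem {a b : FinPath G} {x : XElem G}
    (ha : IsInitialSub a x) (hb : IsInitialSub b x) {i : ℕ} (hia : i < a.edges.length)
    (hib : i < b.edges.length) : a.edges[i] = b.edges[i] := by
  cases x with
  | fin p _ => exact (ha.getElem hia).trans (hb.getElem hib).symm
  | vertex _ _ => exact ha.elim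
  | inf ξ => exact (ha i hia).trans (hb i hib).symm

theorem isInitialSub_theta (b : FinPath G) (x : XElem G) (h : x.source = b.range) :
    IsInitialSub b (theta b x h) := by
  cases x with
  | fin p _ => exact List.prefix_append b.edges p.edges
  | vertex _ _ => exact List.prefix_refl b.edges
  | inf ξ =>
    intro i hi
    show b.edges[i] = if hi' : i < b.edges.length then b.edges[i] else _
    rw [dif_pos hi]

def FinPath.exitPath (p : FinPath G) (i : ℕ) (hi : i < p.edges.length) (e : G.Edge)
    (he : G.src e = G.src p.edges[i]) : FinPath G where
  edges := p.edges.take i ++ [e]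
  ne := List.concat_ne_nil e _
  chain := by
    refine List.isChain_append.mpr ⟨p.chain.take i, List.isChain_singleton e, ?_⟩
    intro x hx y hy
    rw [List.getLast?_take] at hx
    split_ifs at hx with hi0
    · simp at hx
    · simp only [List.getElem?_eq_getElem (by omega : i - 1 < p.edges.length),
        Option.some_or, Option.mem_def, Option.some.injEq] at hx
      simp only [List.head?_cons, Option.mem_def, Option.some.injEq] at hy
      subst hx hy
      rw [he, List.isChain_iff_getElem.mp p.chain (i - 1) (by omega)]
      congr 2
      omega

theorem FinPath.exitPath_source (p : FinPath G) (i : ℕ) (hi : i < p.edges.length)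
    (e : G.Edge) (he : G.src e = G.src p.edges[i]) :
    (p.exitPath i hi e he).source = p.source := by
  rcases Nat.eq_zero_or_pos i with rfl | hpos
  · simp [FinPath.source, exitPath, he, List.head_eq_getElem]
  · simp only [FinPath.source, exitPath]
    rw [List.head_append_of_ne_nil (by simp [hpos.ne', p.ne]), List.head_take]

theorem FinPath.exitPath_length (p : FinPath G) (i : ℕ) (hi : i < p.edges.length)
    (e : G.Edge) (he : G.src e = G.src p.edges[i]) :
    (p.exitPath i hi e he).edges.length = i + 1 := by
  simp [exitPath, Nat.min_eq_left hi.le]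

theorem FinPath.exitPath_getElem (p : FinPath G) (i : ℕ) (hi : i < p.edges.length)
    (e : G.Edge) (he : G.src e = G.src p.edges[i]) :
    (p.exitPath i hi e he).edges[i]'(by rw [exitPath_length]; omega) = e := by
  simp [exitPath]

theorem FinPath.HasExit.exists_not_isInitialSub {α : FinPath G} (h : α.HasExit) :
    ∃ ξ : XElem G, ξ.source = α.source ∧ ¬IsInitialSub α ξ := by
  obtain ⟨i, hi, e, he, hne⟩ := h
  let β := α.exitPath i hi e he
  obtain ⟨x, hx⟩ := XElem.exists_source_eq β.range
  refine ⟨theta β x hx, (theta_source β x hx).trans (α.exitPath_source i hi e he),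
    fun hα => hne ?_⟩
  rw [hα.getElem_eq_getElem (isInitialSub_theta β x hx) hi
    (by rw [FinPath.exitPath_length]; omega)]
  exact (α.exitPath_getElem i hi e he).symm

theorem FinPath.HasExit.xpath_ssubset_xvert {α : FinPath G} (h : α.HasExit) :
    Xpath α ⊂ Xvert α.source :=
  (Set.ssubset_iff_of_subset fun _ hx => IsInitialSub.source_eq hx).mpr
    h.exists_not_isInitialSub

end DirGraph

/-- If `E` satisfies condition (L), then for every closed path `α` there is `ξ ∈ X` with
`s(ξ) = s(α)` of which `α` is not an initial subpath; in particular `X_α ⊊ X_{s(α)}`. -/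
theorem exists_not_initial_of_conditionL {G : DirGraph} (hL : ConditionL G)
    (α : G.FinPath) (hα : α.IsClosed) :
    (∃ ξ : XElem G, ξ.source = α.source ∧ ¬ IsInitialSub α ξ) ∧
      Xpath α ⊂ Xvert α.source := by
  have hexit := hL α hα
  exact ⟨hexit.exists_not_isInitialSub, hexit.xpath_ssubset_xvert⟩
end
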